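/- arXiv:1306.2422 — 8 statements merged into one kernel-verified Lean document; each statement's English description precedes it below -/
import Mathlib

section
/- If K ⊆ C ⊆ L_m(G) satisfies K = P⁻¹P(K) ∩ L_m(G) (K is (L_m(G),P)-normal) and K̄ = P⁻¹P(K̄) ∩ L(G) (K̄ is (L(G),P)-normal), then K is relatively observable with respect to C̄. -/
/-- Natural projection: erase unobservable events (those with `obs a = false`). -/
def proj {α : Type*} (obs : α → Bool) (s : List α) : List α := s.filter obs

/-- Prefix closure of a language. -/
def pcl {α : Type*} (L : Set (List α)) : Set (List α) := {u | ∃ v ∈ L, u <+: v}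

/-- A language is prefix-closed. -/
def PrefixClosed {α : Type*} (L : Set (List α)) : Prop :=
  ∀ u v : List α, u <+: v → v ∈ L → u ∈ L

/-- `K` is relatively observable w.r.t. the ambient language `pcl C`, plant `LG`/`Lm`,
and the natural projection determined by `obs`. -/
def RelObs {α : Type*} (obs : α → Bool) (LG Lm C K : Set (List α)) : Prop :=
  ∀ s s' : List α, proj obs s = proj obs s' →
    ((∀ σ : α, s ++ [σ] ∈ pcl K → s' ∈ pcl C → s' ++ [σ] ∈ LG → s' ++ [σ] ∈ pcl K) ∧
     (s ∈ K → s' ∈ pcl C → s' ∈ Lm → s' ∈ K))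

theorem stmt_2 {α : Type*} (obs : α → Bool) (LG Lm C K : Set (List α))
    (hLG : PrefixClosed LG) (hLm : Lm ⊆ LG)
    (hKC : K ⊆ C) (hCLm : C ⊆ Lm)
    (hnormK : K = {s | proj obs s ∈ proj obs '' K} ∩ Lm)
    (hnormKbar : pcl K = {s | proj obs s ∈ proj obs '' (pcl K)} ∩ LG) :
    RelObs obs LG Lm C K := by
  intro s s' hps
  constructor
  · intro σ hsK _ hLG'
    rw [hnormKbar]
    refine ⟨⟨s ++ [σ], hsK, ?_⟩, hLG'⟩
    simp only [proj, List.filter_append]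
    exact congrArg (· ++ List.filter obs [σ]) hps
  · intro hsK _ hsLm
    rw [hnormK]
    exact ⟨⟨s, hsK, hps⟩, hsLm⟩
end

section
/- Let K_i ⊆ C, for i in an index set I, each be relatively observable with respect to C̄. Then K = ⋃_{i∈I} K_i is relatively observable with respect to C̄. -/
theorem stmt_5 {α : Type*} {ι : Type*} (obs : α → Bool) (LG Lm C : Set (List α))
    (hLG : PrefixClosed LG) (hLm : Lm ⊆ LG) (hCLm : C ⊆ Lm)
    (K : ι → Set (List α)) (hKC : ∀ i, K i ⊆ C)
    (h : ∀ i, RelObs obs LG Lm C (K i)) :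
    RelObs obs LG Lm C (⋃ i, K i) := by
  have hpcl : pcl (⋃ i, K i) = ⋃ i, pcl (K i) := by
    ext u
    constructor
    · rintro ⟨v, hv, huv⟩
      rcases Set.mem_iUnion.1 hv with ⟨i, hi⟩
      exact Set.mem_iUnion.2 ⟨i, v, hi, huv⟩
    · rintro hu
      rcases Set.mem_iUnion.1 hu with ⟨i, v, hi, huv⟩
      exact ⟨v, Set.mem_iUnion.2 ⟨i, hi⟩, huv⟩
  intro s s' hP
  constructor
  · intro σ hs hs' hLG'
    rw [hpcl] at hs ⊢
    rcases Set.mem_iUnion.1 hs with ⟨i, hi⟩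
    exact Set.mem_iUnion.2 ⟨i, ((h i s s' hP).1 σ hi hs' hLG')⟩
  · intro hs hs' hLm'
    rcases Set.mem_iUnion.1 hs with ⟨i, hi⟩
    exact Set.mem_iUnion.2 ⟨i, (h i s s' hP).2 hi hs' hLm'⟩
end

section
/- For K ⊆ C ⊆ L_m(G), the family O(K,C) of sublanguages of K that are relatively observable with respect to C̄ is nonempty (it contains the empty language), and it contains a unique supremal element sup O(K,C) = ⋃{K' : K' ∈ O(K,C)}, i.e., this union is itself relatively observable with respect to C̄, is a sublanguage of K, and contains every member of O(K,C). -/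
theorem stmt_7 {α : Type*} (obs : α → Bool) (LG Lm C K : Set (List α))
    (hLG : PrefixClosed LG) (hLm : Lm ⊆ LG)
    (hKC : K ⊆ C) (hCLm : C ⊆ Lm) :
    (∅ : Set (List α)) ∈ {K' | K' ⊆ K ∧ RelObs obs LG Lm C K'} ∧
    RelObs obs LG Lm C (⋃₀ {K' | K' ⊆ K ∧ RelObs obs LG Lm C K'}) ∧
    (⋃₀ {K' | K' ⊆ K ∧ RelObs obs LG Lm C K'}) ⊆ K ∧
    (∀ K' ∈ {K' | K' ⊆ K ∧ RelObs obs LG Lm C K'},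
      K' ⊆ ⋃₀ {K' | K' ⊆ K ∧ RelObs obs LG Lm C K'}) := by
  have hpcl : ∀ u : List α, u ∈ pcl (⋃₀ {K' | K' ⊆ K ∧ RelObs obs LG Lm C K'}) ↔
      ∃ K' ∈ {K' | K' ⊆ K ∧ RelObs obs LG Lm C K'}, u ∈ pcl K' := by
    intro u
    constructor
    · rintro ⟨v, ⟨K', hK', hv⟩, hpre⟩
      exact ⟨K', hK', v, hv, hpre⟩
    · rintro ⟨K', hK', v, hv, hpre⟩
      exact ⟨v, ⟨K', hK', hv⟩, hpre⟩
  refine ⟨⟨by simp, ?_⟩, ?_, ?_, ?_⟩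
  · intro s s' _
    constructor
    · rintro σ ⟨v, hv, _⟩ _ _
      exact absurd hv (by simp [Set.mem_empty_iff_false])
    · intro h; exact absurd h (by simp)
  · intro s s' hP
    constructor
    · intro σ hs hs' hsL
      rw [hpcl] at hs
      obtain ⟨K', hK', hs⟩ := hs
      rw [hpcl]
      exact ⟨K', hK', ((hK'.2 s s' hP).1 σ hs hs' hsL)⟩
    · rintro ⟨K', hK', hs⟩ hs' hLm'
      exact ⟨K', hK', (hK'.2 s s' hP).2 hs hs' hLm'⟩
  · rintro u ⟨K', hK', hu⟩
    exact hK'.1 hu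
  · intro K' hK' u hu
    exact ⟨K', hK', hu⟩
end

section
/- For K ⊆ C ⊆ L_m(G), sup O(K,C) ⊆ sup O(K), where sup O(K,C) is the supremal sublanguage of K relatively observable with respect to C̄ and sup O(K) is the supremal sublanguage of K relatively observable with respect to K̄. -/
theorem stmt_9 {α : Type*} (obs : α → Bool) (LG Lm C K : Set (List α))
    (hLG : PrefixClosed LG) (hLm : Lm ⊆ LG)
    (hKC : K ⊆ C) (hCLm : C ⊆ Lm) :
    (⋃₀ {K' | K' ⊆ K ∧ RelObs obs LG Lm C K'}) ⊆
    (⋃₀ {K' | K' ⊆ K ∧ RelObs obs LG Lm K K'}) := by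
  rintro x ⟨K', ⟨hK'K, hRO⟩, hx⟩
  refine ⟨K', ⟨hK'K, ?_⟩, hx⟩
  intro s s' hp
  obtain ⟨h1, h2⟩ := hRO s s' hp
  have hmono : s' ∈ pcl K → s' ∈ pcl C := fun ⟨v, hv, hpre⟩ => ⟨v, hKC hv, hpre⟩
  exact ⟨fun σ ha hb hc => h1 σ ha (hmono hb) hc, fun ha hb hc => h2 ha (hmono hb) hc⟩
end

section
/- Relative observability is not closed under intersection: there exist a generator G, a natural projection P, an ambient language C ⊆ L_m(G), and sublanguages K₁, K₂ ⊆ C, both relatively observable with respect to C̄, such that K₁ ∩ K₂ is not relatively observable with respect to C̄. -/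
private lemma prefix_enum2 (u : List Bool) (a b : Bool) :
    u <+: [a, b] ↔ u = [] ∨ u = [a] ∨ u = [a, b] := by
  rw [← List.mem_inits]
  simp [List.inits]

private lemma prefix_enum3 (u : List Bool) (a b c : Bool) :
    u <+: [a, b, c] ↔ u = [] ∨ u = [a] ∨ u = [a, b] ∨ u = [a, b, c] := by
  rw [← List.mem_inits]
  simp [List.inits]

private lemma mem_pcl_pair (u v1 v2 : List Bool) :
    u ∈ pcl ({v1, v2} : Set (List Bool)) ↔ u <+: v1 ∨ u <+: v2 := by
  simp [pcl]

private lemma mem_pcl_triple (u v1 v2 v3 : List Bool) :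
    u ∈ pcl ({v1, v2, v3} : Set (List Bool)) ↔ u <+: v1 ∨ u <+: v2 ∨ u <+: v3 := by
  simp [pcl]

private lemma mem_pcl_single (u v : List Bool) :
    u ∈ pcl ({v} : Set (List Bool)) ↔ u <+: v := by
  simp [pcl]

theorem stmt_10 :
    ∃ (α : Type) (obs : α → Bool) (LG Lm C K₁ K₂ : Set (List α)),
      PrefixClosed LG ∧ Lm ⊆ LG ∧ C ⊆ Lm ∧ K₁ ⊆ C ∧ K₂ ⊆ C ∧
      RelObs obs LG Lm C K₁ ∧ RelObs obs LG Lm C K₂ ∧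
      ¬ RelObs obs LG Lm C (K₁ ∩ K₂) := by
  -- events: `true` observable, `false` unobservable
  -- w1 = aas, w2 = ss, w3 = sss
  refine ⟨Bool, id,
    {l | l <+: [false, false, true] ∨ l <+: [true, true, true]},
    {[false, false], [false, false, true], [true, true], [true, true, true]},
    {[false, false, true], [true, true], [true, true, true]},
    {[false, false, true], [true, true]},
    {[false, false, true], [true, true, true]}, ?_, ?_, ?_, ?_, ?_, ?_, ?_, ?_⟩
  · intro u v huv hv
    rcases hv with h | h
    · exact Or.inl (huv.trans h)
    · exact Or.inr (huv.trans h)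
  · intro u hu
    simp only [Set.mem_insert_iff, Set.mem_singleton_iff] at hu
    rcases hu with rfl | rfl | rfl | rfl <;> simp [prefix_enum3]
  · intro u hu
    simp only [Set.mem_insert_iff, Set.mem_singleton_iff] at hu ⊢
    tauto
  · intro u hu
    simp only [Set.mem_insert_iff, Set.mem_singleton_iff] at hu ⊢
    tauto
  · intro u hu
    simp only [Set.mem_insert_iff, Set.mem_singleton_iff] at hu ⊢
    tauto
  · -- K₁ relatively observable
    intro s s' hp
    constructor
    · intro σ h1 h2 h3
      rw [mem_pcl_pair] at h1 ⊢
      rw [mem_pcl_triple] at h2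
      have hs : s = [] ∨ s = [false] ∨ s = [false, false] ∨ s = [false, false, true]
          ∨ s = [true] ∨ s = [true, true] := by
        have : s <+: [false, false, true] ∨ s <+: [true, true] := by
          rcases h1 with h | h
          · exact Or.inl ((List.prefix_append s [σ]).trans h)
          · exact Or.inr ((List.prefix_append s [σ]).trans h)
        rcases this with h | h
        · rw [prefix_enum3] at h; tauto
        · rw [prefix_enum2] at h; tauto
      rw [prefix_enum3, prefix_enum2, prefix_enum3] at h2
      simp only [Set.mem_setOf_eq] at h3
      rcases hs with rfl | rfl | rfl | rfl | rfl | rfl <;>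
        rcases h2 with (rfl | rfl | rfl | rfl) | (rfl | rfl | rfl) | (rfl | rfl | rfl | rfl) <;>
        cases σ <;> revert h1 h3 hp <;> decide
    · intro hK hC hLm
      simp only [Set.mem_insert_iff, Set.mem_singleton_iff] at hK hLm ⊢
      rw [mem_pcl_triple, prefix_enum3, prefix_enum2, prefix_enum3] at hC
      rcases hK with rfl | rfl <;>
        rcases hC with (rfl | rfl | rfl | rfl) | (rfl | rfl | rfl) | (rfl | rfl | rfl | rfl) <;>
        revert hp hLm <;> decide
  · -- K₂ relatively observable
    intro s s' hp
    constructor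
    · intro σ h1 h2 h3
      rw [mem_pcl_pair] at h1 ⊢
      rw [mem_pcl_triple] at h2
      have hs : s = [] ∨ s = [false] ∨ s = [false, false] ∨ s = [false, false, true]
          ∨ s = [true] ∨ s = [true, true] ∨ s = [true, true, true] := by
        have : s <+: [false, false, true] ∨ s <+: [true, true, true] := by
          rcases h1 with h | h
          · exact Or.inl ((List.prefix_append s [σ]).trans h)
          · exact Or.inr ((List.prefix_append s [σ]).trans h)
        rcases this with h | h <;> rw [prefix_enum3] at h <;> tauto
      rw [prefix_enum3, prefix_enum2, prefix_enum3] at h2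
      simp only [Set.mem_setOf_eq] at h3
      rcases hs with rfl | rfl | rfl | rfl | rfl | rfl | rfl <;>
        rcases h2 with (rfl | rfl | rfl | rfl) | (rfl | rfl | rfl) | (rfl | rfl | rfl | rfl) <;>
        cases σ <;> revert h1 h3 hp <;> decide
    · intro hK hC hLm
      simp only [Set.mem_insert_iff, Set.mem_singleton_iff] at hK hLm ⊢
      rw [mem_pcl_triple, prefix_enum3, prefix_enum2, prefix_enum3] at hC
      rcases hK with rfl | rfl <;>
        rcases hC with (rfl | rfl | rfl | rfl) | (rfl | rfl | rfl) | (rfl | rfl | rfl | rfl) <;>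
        revert hp hLm <;> decide
  · -- intersection fails
    intro h
    have hint : ({[false, false, true], [true, true]} : Set (List Bool)) ∩
        {[false, false, true], [true, true, true]} = {[false, false, true]} := by
      ext u
      simp only [Set.mem_inter_iff, Set.mem_insert_iff, Set.mem_singleton_iff]
      constructor
      · rintro ⟨rfl | rfl, h2⟩
        · rfl
        · rcases h2 with h2 | h2 <;> simp at h2
      · rintro rfl; exact ⟨Or.inl rfl, Or.inl rfl⟩
    have key := (h [false, false] [] (by decide)).1 true
    rw [hint, mem_pcl_single, mem_pcl_single] at key
    have := key (by decide)
      (by rw [mem_pcl_triple]; left; exact List.nil_prefix)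
      (by simp only [Set.mem_setOf_eq]; right; decide)
    revert this
    decide
end

section
/- Observability does not imply relative observability: there exist a generator G, a natural projection P, a language C ⊆ L_m(G), and K ⊆ C such that K is observable (relatively observable with respect to K̄) but K is not relatively observable with respect to C̄. -/
lemma pref2 {a b : Bool} {u : List Bool} : u <+: [a,b] ↔ u = [] ∨ u = [a] ∨ u = [a,b] := by
  constructor
  · rintro ⟨t, ht⟩
    match u, t, ht with
    | [], _, _ => left; rfl
    | [x], [y], h => right; left; simp_all
    | [x,y], [], h => right; right; simp_all
  · rintro (rfl|rfl|rfl) <;> simp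

theorem stmt_11 :
    ∃ (α : Type) (obs : α → Bool) (LG Lm C K : Set (List α)),
      PrefixClosed LG ∧ Lm ⊆ LG ∧ C ⊆ Lm ∧ K ⊆ C ∧
      RelObs obs LG Lm K K ∧ ¬ RelObs obs LG Lm C K := by
  refine ⟨Bool, id, {l | l <+: [true,false] ∨ l <+: [false,true]},
    {[true,false],[false,true]}, {[true,false],[false,true]}, {[true,false]},
    ?_, ?_, ?_, ?_, ?_, ?_⟩
  · intro u v huv hv
    rcases hv with h|h
    · exact Or.inl (huv.trans h)
    · exact Or.inr (huv.trans h)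
  · rintro l (rfl|rfl) <;> simp [pref2]
  · exact subset_rfl
  · rintro l rfl; left; rfl
  · -- K observable
    intro s s' hss
    have memK : ∀ u : List Bool, u ∈ pcl ({[true,false]} : Set (List Bool)) ↔
        (u = [] ∨ u = [true] ∨ u = [true,false]) := by
      intro u; simp [pcl, pref2]
    constructor
    · intro σ h1 h2 hLG
      rw [memK] at h1 h2 ⊢
      have h1' : (s = [] ∧ σ = true) ∨ (s = [true] ∧ σ = false) := by
        rcases h1 with h|h|h
        · simp at h
        · have hl := congrArg List.length h
          simp at hl
          subst hl
          simp at h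
          tauto
        · have hl := congrArg List.length h
          simp at hl
          match s, hl with
          | [x], _ =>
            simp at h
            tauto
      rcases h1' with ⟨rfl, rfl⟩ | ⟨rfl, rfl⟩
      · -- s = [], σ = true ; filter s' = []
        simp [proj] at hss
        rcases h2 with rfl|rfl|rfl
        · simp
        · simp at hss
        · simp at hss
      · -- s = [true], σ = false ; filter s' = [true]
        simp [proj] at hss
        rcases h2 with rfl|rfl|rfl
        · simp at hss
        · simp
        · -- s' = [true,false]: excluded by LG
          exfalso
          rcases hLG with h|h <;> revert h <;> decide
    · intro h1 h2 h3
      rw [memK] at h2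
      rcases h3 with rfl|rfl
      · rfl
      · rcases h2 with h|h|h <;> simp_all
  · -- not rel obs wrt C
    intro h
    have := (h [true,false] [false,true] (by simp [proj])).2 rfl
      (by exact ⟨[false,true], by simp, List.prefix_rfl⟩) (by right; rfl)
    simp at this
end

section
/- Relative observability does not imply normality: there exist G, P, C, and K ⊆ C ⊆ L_m(G) such that K is relatively observable with respect to C̄ but K ≠ P⁻¹P(K) ∩ L_m(G), i.e., K is not (L_m(G),P)-normal. -/
theorem stmt_12 :
    ∃ (α : Type) (obs : α → Bool) (LG Lm C K : Set (List α)),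
      PrefixClosed LG ∧ Lm ⊆ LG ∧ C ⊆ Lm ∧ K ⊆ C ∧
      RelObs obs LG Lm C K ∧
      K ≠ {s | proj obs s ∈ proj obs '' K} ∩ Lm := by
  refine ⟨Bool, (fun _ => false), {[], [true], [false]}, {[true], [false]},
    {[true]}, {[true]}, ?_, ?_, ?_, ?_, ?_, ?_⟩
  · rintro u v huv (rfl | rfl | rfl)
    · simp [List.prefix_nil] at huv; simp [huv]
    · rcases List.prefix_cons_iff.mp huv with rfl | ⟨t, rfl, ht⟩
      · simp
      · simp [List.prefix_nil] at ht; simp [ht]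
    · rcases List.prefix_cons_iff.mp huv with rfl | ⟨t, rfl, ht⟩
      · simp
      · simp [List.prefix_nil] at ht; simp [ht]
  · rintro x (rfl | rfl) <;> simp
  · rintro x rfl; simp
  · rintro x rfl; simp
  · intro s s' _
    constructor
    · rintro σ ⟨v, rfl, hpre⟩ ⟨w, rfl, hpre'⟩ hLG
      rcases List.prefix_cons_iff.mp hpre' with rfl | ⟨t, rfl, ht⟩
      · -- s' = []
        rcases hLG with h | h | h
        · simp at h
        · simp at h; subst h
          exact ⟨[true], rfl, List.prefix_refl _⟩
        · simp at h
          -- h : σ = false, but s++[σ] <+: [true] forces σ = true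
          exfalso
          have hlen := hpre.length_le
          simp at hlen
          subst hlen
          simp at hpre
          simp [hpre] at h
      · -- s' = true :: t, t <+: []
        simp [List.prefix_nil] at ht; subst ht
        rcases hLG with h | h | h <;> simp at h
    · rintro hs ⟨w, rfl, hpre'⟩ hLm
      rcases hLm with h | h
      · exact h
      · exfalso
        rcases List.prefix_cons_iff.mp hpre' with h2 | ⟨t, h2, ht⟩
        · rw [h2] at h; simp at h
        · rw [h2] at h; simp at h
  · intro h
    have : ([false] : List Bool) ∈ ({[true]} : Set (List Bool)) := by
      rw [h]
      constructor
      · exact ⟨[true], rfl, rfl⟩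
      · simp
    simp at this
end

section
/- Every controllable language is closed under the supremal operation: for K ⊆ L_m(G), the union sup C(K) = ⋃{K' ⊆ K : K' controllable} is itself controllable, so the family of controllable sublanguages of K contains a unique supremal element. -/
/-- Controllability of `K'` w.r.t. plant `LG` and uncontrollable events `unc`. -/
def Controllable {α : Type*} (unc : α → Prop) (LG K' : Set (List α)) : Prop :=
  ∀ s ∈ pcl K', ∀ σ : α, unc σ → s ++ [σ] ∈ LG → s ++ [σ] ∈ pcl K'

theorem stmt_14 {α : Type*} (unc : α → Prop) (LG Lm K : Set (List α))
    (hLG : PrefixClosed LG) (hLm : Lm ⊆ LG) (hK : K ⊆ Lm) :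
    Controllable unc LG (⋃₀ {K' | K' ⊆ K ∧ Controllable unc LG K'}) ∧
    (⋃₀ {K' | K' ⊆ K ∧ Controllable unc LG K'}) ⊆ K ∧
    (∀ K' ∈ {K' | K' ⊆ K ∧ Controllable unc LG K'},
      K' ⊆ ⋃₀ {K' | K' ⊆ K ∧ Controllable unc LG K'}) := by
  refine ⟨?_, ?_, ?_⟩
  · rintro s ⟨v, ⟨K', ⟨hK'K, hK'c⟩, hvK'⟩, hsv⟩ σ hσ hLGs
    have hs : s ∈ pcl K' := ⟨v, hvK', hsv⟩
    obtain ⟨w, hwK', hsw⟩ := hK'c s hs σ hσ hLGs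
    exact ⟨w, ⟨K', ⟨hK'K, hK'c⟩, hwK'⟩, hsw⟩
  · rintro s ⟨K', ⟨hK'K, _⟩, hs⟩
    exact hK'K hs
  · intro K' hK' s hs
    exact ⟨K', hK', hs⟩
end
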